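/- arXiv:1708.01430 — 6 statements merged into one kernel-verified Lean document; each statement's English description precedes it below -/
import Mathlib

section
/- For n ≥ 2 and a degree function d : Fin n → ℤ, there exists a unique map κ : S_n × S_n → {±1} (where the second argument ρ represents the permuted sequence g = ρ(f), i.e. g_i = f_{ρ⁻¹(i)}) such that (1) κ(στ, ρ) = κ(σ, τρ)·κ(τ, ρ) for all σ, τ, ρ ∈ S_n, and (2) κ(s_i, ρ) = (-1)^{d(ρ⁻¹(i))·d(ρ⁻¹(i+1))} for every adjacent transposition s_i = (i, i+1), 1 ≤ i ≤ n-1, and every ρ ∈ S_n. -/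
/-- The Koszul sign map property: `κ σ ρ` is the Koszul sign of correcting the
permuted sequence `g = ρ(f)` (i.e. `g i = f (ρ⁻¹ i)`) by `σ`, with degrees `d`. -/
def IsKoszul {n : ℕ} (d : Fin n → ℤ)
    (κ : Equiv.Perm (Fin n) → Equiv.Perm (Fin n) → ℤˣ) : Prop :=
  (∀ σ τ ρ, κ (σ * τ) ρ = κ σ (τ * ρ) * κ τ ρ) ∧
  (∀ (i : ℕ) (h : i + 1 < n) (ρ : Equiv.Perm (Fin n)),
    κ (Equiv.swap ⟨i, Nat.lt_of_succ_lt h⟩ ⟨i + 1, h⟩) ρ =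
      (-1 : ℤˣ) ^ (d (ρ⁻¹ ⟨i, Nat.lt_of_succ_lt h⟩) * d (ρ⁻¹ ⟨i + 1, h⟩)))

/-!
The Koszul sign map is the coboundary `κ(σ, ρ) = ε(σρ) ε(ρ)⁻¹` of the Koszul sign `ε(ρ)` of a
single reordering, the product of `(-1)^(|x| |y|)` over the pairs of symbols that `ρ` puts out of
order. The cocycle identity is then automatic, and the value on an adjacent transposition holds
because composing with `(i, i+1)` changes the set of out-of-order pairs by exactly one pair.
Uniqueness: the cocycle identity determines `κ(στ, ·)` from `κ(σ, ·)` and `κ(τ, ·)`, and the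
adjacent transpositions generate `S_n`.
-/

open Equiv Finset

theorem swap_lt_swap_iff_of_val_add_one_eq {n : ℕ} {u v : Fin n} (huv : (u : ℕ) + 1 = v)
    (a b : Fin n) :
    swap u v a < swap u v b ↔ a < b ∧ (a, b) ≠ (u, v) ∨ (a, b) = (v, u) := by
  simp only [swap_apply_def, Ne, Prod.mk.injEq, Fin.lt_def, Fin.ext_iff]
  split_ifs <;> omega

theorem prod_lt_pairs_comp_swap {n : ℕ} {M : Type*} [CommGroup M] {u v : Fin n}
    (huv : (u : ℕ) + 1 = v) (g : Fin n × Fin n → M) :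
    ∏ p : Fin n × Fin n with p.1 < p.2, g (swap u v p.1, swap u v p.2) =
      g (v, u) * (g (u, v))⁻¹ * ∏ p : Fin n × Fin n with p.1 < p.2, g p := by
  have hlt : u < v := by rw [Fin.lt_def]; omega
  have hswapped : ({p : Fin n × Fin n | swap u v p.1 < swap u v p.2} : Finset _) =
      insert (v, u) (({p : Fin n × Fin n | p.1 < p.2} : Finset _).erase (u, v)) := by
    ext p
    simp only [mem_filter, mem_univ, true_and, mem_insert, mem_erase,
      swap_lt_swap_iff_of_val_add_one_eq huv]
    tauto
  rw [prod_equiv (prodCongr (swap u v) (swap u v)) (t := {p | swap u v p.1 < swap u v p.2})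
    (g := g) (by simp) (by simp), hswapped, prod_insert (by simp [hlt.le]),
    ← mul_prod_erase {p : Fin n × Fin n | p.1 < p.2} g (a := (u, v)) (by simpa using hlt)]
  group

/-- The Koszul sign of reordering `f₀, …, f_{n-1}` into `g = ρ(f)`: one factor `(-1)^(|x| |y|)`
for each pair of positions `a < b` of `g` holding `f_x, f_y` in the opposite order `y < x`. -/
def koszulSign {n : ℕ} (d : Fin n → ℤ) (ρ : Perm (Fin n)) : ℤˣ :=
  ∏ p : Fin n × Fin n with p.1 < p.2,
    if ρ⁻¹ p.2 < ρ⁻¹ p.1 then (-1) ^ (d (ρ⁻¹ p.1) * d (ρ⁻¹ p.2)) else 1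

theorem koszulSign_swap_mul {n : ℕ} (d : Fin n → ℤ) {u v : Fin n} (huv : (u : ℕ) + 1 = v)
    (ρ : Perm (Fin n)) :
    koszulSign d (swap u v * ρ) = (-1) ^ (d (ρ⁻¹ u) * d (ρ⁻¹ v)) * koszulSign d ρ := by
  have hne : ρ⁻¹ u ≠ ρ⁻¹ v := ρ⁻¹.injective.ne (Fin.ne_of_val_ne (by omega))
  simp only [koszulSign, mul_inv_rev, swap_inv, Perm.mul_apply]
  rw [prod_lt_pairs_comp_swap huv (fun p ↦ if ρ⁻¹ p.2 < ρ⁻¹ p.1 then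
    (-1) ^ (d (ρ⁻¹ p.1) * d (ρ⁻¹ p.2)) else 1)]
  congr 1
  dsimp only
  rcases hne.lt_or_gt with h | h
  · rw [if_pos h, if_neg h.not_gt, inv_one, mul_one, mul_comm (d _)]
  · rw [if_neg h.not_gt, if_pos h, one_mul, Int.units_inv_eq_self]

def IsCocycle {G M : Type*} [Mul G] [Mul M] (κ : G → G → M) : Prop :=
  ∀ σ τ ρ, κ (σ * τ) ρ = κ σ (τ * ρ) * κ τ ρ

theorem isCocycle_coboundary {G M : Type*} [Semigroup G] [Group M] (F : G → M) :
    IsCocycle fun σ ρ ↦ F (σ * ρ) * (F ρ)⁻¹ := by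
  intro σ τ ρ
  simp only [mul_assoc, inv_mul_cancel_left]

theorem IsCocycle.apply_one {G M : Type*} [Monoid G] [LeftCancelMonoid M] {κ : G → G → M}
    (hκ : IsCocycle κ) (ρ : G) : κ 1 ρ = 1 := by
  have h := hκ 1 1 ρ
  rwa [one_mul, one_mul, left_eq_mul] at h

theorem IsCocycle.ext_of_closure_eq_top {G M : Type*} [Monoid G] [LeftCancelMonoid M]
    {S : Set G} (hS : Submonoid.closure S = ⊤) {κ κ' : G → G → M} (hκ : IsCocycle κ)
    (hκ' : IsCocycle κ') (h : ∀ s ∈ S, κ s = κ' s) : κ = κ' := by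
  funext σ
  induction (hS ▸ Submonoid.mem_top σ : σ ∈ Submonoid.closure S)
    using Submonoid.closure_induction with
  | mem s hs => exact h s hs
  | one => funext ρ; rw [hκ.apply_one, hκ'.apply_one]
  | mul σ τ _ _ ihσ ihτ => funext ρ; rw [hκ, hκ', ihσ, ihτ]

theorem Equiv.Perm.mclosure_adjacent_swaps (n : ℕ) :
    Submonoid.closure {σ : Perm (Fin n) | ∃ (i : ℕ) (h : i + 1 < n),
      σ = swap ⟨i, Nat.lt_of_succ_lt h⟩ ⟨i + 1, h⟩} = ⊤ := by
  cases n with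
  | zero => exact Subsingleton.elim _ _
  | succ m =>
    refine top_unique ((mclosure_swap_castSucc_succ m).ge.trans (Submonoid.closure_mono ?_))
    rintro _ ⟨i, rfl⟩
    exact ⟨i, by omega, rfl⟩

theorem koszul_exists_unique_general (n : ℕ) (d : Fin n → ℤ) :
    ∃! κ : Equiv.Perm (Fin n) → Equiv.Perm (Fin n) → ℤˣ, IsKoszul d κ := by
  have koszul_swap : ∀ (i : ℕ) (h : i + 1 < n) (ρ : Perm (Fin n)),
      koszulSign d (swap ⟨i, Nat.lt_of_succ_lt h⟩ ⟨i + 1, h⟩ * ρ) * (koszulSign d ρ)⁻¹ =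
        (-1) ^ (d (ρ⁻¹ ⟨i, Nat.lt_of_succ_lt h⟩) * d (ρ⁻¹ ⟨i + 1, h⟩)) := fun i h ρ ↦ by
    rw [koszulSign_swap_mul d rfl, mul_inv_cancel_right]
  refine ⟨fun σ ρ ↦ koszulSign d (σ * ρ) * (koszulSign d ρ)⁻¹,
    ⟨isCocycle_coboundary (koszulSign d), koszul_swap⟩, fun κ ⟨hκ, hκ_swap⟩ ↦ ?_⟩
  refine IsCocycle.ext_of_closure_eq_top (Perm.mclosure_adjacent_swaps n) hκ
    (isCocycle_coboundary (koszulSign d)) ?_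
  rintro _ ⟨i, h, rfl⟩
  funext ρ
  rw [hκ_swap, koszul_swap]

/-- Existence and uniqueness of the Koszul sign map. -/
theorem koszul_exists_unique (n : ℕ) (hn : 2 ≤ n) (d : Fin n → ℤ) :
    ∃! κ : Equiv.Perm (Fin n) → Equiv.Perm (Fin n) → ℤˣ, IsKoszul d κ :=
  koszul_exists_unique_general n d
end

section
/- Define a map κ₀ on words in the adjacent transpositions by κ₀(s_{i_1}⋯s_{i_m}, ρ) = κ₀(s_{i_1}, s_{i_2}⋯s_{i_m}ρ)·κ₀(s_{i_2}, s_{i_3}⋯s_{i_m}ρ)⋯κ₀(s_{i_m}, ρ) with κ₀(s_i, ρ) = (-1)^{d(ρ⁻¹(i))·d(ρ⁻¹(i+1))}. Then for every i ∈ {1,...,n-2} and every ρ ∈ S_n, the braid relation is κ₀-compatible: κ₀ evaluated along the word s_i s_{i+1} s_i at ρ equals κ₀ evaluated along the word s_{i+1} s_i s_{i+1} at ρ; concretely, both equal (-1)^{d(ρ⁻¹(i))d(ρ⁻¹(i+1)) + d(ρ⁻¹(i))d(ρ⁻¹(i+2)) + d(ρ⁻¹(i+1))d(ρ⁻¹(i+2))}.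 -/
/-- The elementary Koszul sign of the adjacent transposition `s i = (i, i+1)`
applied to the permuted sequence `g = ρ(f)`. -/
def koszulBase {n : ℕ} (d : Fin n → ℤ) (i : ℕ) (h : i + 1 < n)
    (ρ : Equiv.Perm (Fin n)) : ℤˣ :=
  (-1 : ℤˣ) ^ (d (ρ⁻¹ ⟨i, Nat.lt_of_succ_lt h⟩) * d (ρ⁻¹ ⟨i + 1, h⟩))

/-!
Along either word `s_i s_{i+1} s_i` or `s_{i+1} s_i s_{i+1}`, each pair of the entries in
positions `i, i+1, i+2` of `ρ(f)` is exchanged exactly once, so both sides are the product of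
the three pair signs `(-1)^(d x * d y)`, only in opposite orders.
-/

/-- The braid relation is compatible with the word-evaluation κ₀. -/
theorem koszul_braid (n : ℕ) (d : Fin n → ℤ) (i : ℕ) (h : i + 1 + 1 < n)
    (ρ : Equiv.Perm (Fin n)) :
    (koszulBase d i (Nat.lt_of_succ_lt h)
        (Equiv.swap ⟨i + 1, Nat.lt_of_succ_lt h⟩ ⟨i + 2, h⟩ *
          (Equiv.swap ⟨i, by omega⟩ ⟨i + 1, by omega⟩ * ρ)) *
      koszulBase d (i + 1) h (Equiv.swap ⟨i, by omega⟩ ⟨i + 1, by omega⟩ * ρ) *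
      koszulBase d i (Nat.lt_of_succ_lt h) ρ =
    koszulBase d (i + 1) h
        (Equiv.swap ⟨i, by omega⟩ ⟨i + 1, by omega⟩ *
          (Equiv.swap ⟨i + 1, Nat.lt_of_succ_lt h⟩ ⟨i + 2, h⟩ * ρ)) *
      koszulBase d i (Nat.lt_of_succ_lt h)
        (Equiv.swap ⟨i + 1, Nat.lt_of_succ_lt h⟩ ⟨i + 2, h⟩ * ρ) *
      koszulBase d (i + 1) h ρ) ∧
    koszulBase d i (Nat.lt_of_succ_lt h)
        (Equiv.swap ⟨i + 1, Nat.lt_of_succ_lt h⟩ ⟨i + 2, h⟩ *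
          (Equiv.swap ⟨i, by omega⟩ ⟨i + 1, by omega⟩ * ρ)) *
      koszulBase d (i + 1) h (Equiv.swap ⟨i, by omega⟩ ⟨i + 1, by omega⟩ * ρ) *
      koszulBase d i (Nat.lt_of_succ_lt h) ρ =
    (-1 : ℤˣ) ^ (d (ρ⁻¹ ⟨i, by omega⟩) * d (ρ⁻¹ ⟨i + 1, by omega⟩) +
      d (ρ⁻¹ ⟨i, by omega⟩) * d (ρ⁻¹ ⟨i + 2, h⟩) +
      d (ρ⁻¹ ⟨i + 1, by omega⟩) * d (ρ⁻¹ ⟨i + 2, h⟩)) := by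
  have hab : (⟨i, by omega⟩ : Fin n) ≠ ⟨i + 1, by omega⟩ := by simp [Fin.ext_iff]
  have hac : (⟨i, by omega⟩ : Fin n) ≠ ⟨i + 2, h⟩ := by simp [Fin.ext_iff]
  have hbc : (⟨i + 1, by omega⟩ : Fin n) ≠ ⟨i + 2, h⟩ := by simp [Fin.ext_iff]
  simp only [koszulBase, mul_inv_rev, Equiv.Perm.mul_apply, Equiv.swap_inv,
    Equiv.swap_apply_left, Equiv.swap_apply_right, Equiv.swap_apply_of_ne_of_ne hab hac,
    Equiv.swap_apply_of_ne_of_ne hac.symm hbc.symm, ← zpow_add]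
  constructor <;> congr 1 <;> ring
end

section
/- With the word-evaluation κ₀ as below, for all i, j ∈ {1,...,n-1} with |i - j| > 1 and every ρ ∈ S_n, κ₀ along the word s_i s_j at ρ equals κ₀ along the word s_j s_i at ρ, and both equal (-1)^{d(ρ⁻¹(i))d(ρ⁻¹(i+1)) + d(ρ⁻¹(j))d(ρ⁻¹(j+1))}. -/
lemma koszulBase_mul_of_apply_eq {n : ℕ} (d : Fin n → ℤ) (i : ℕ) (hi : i + 1 < n)
    {σ : Equiv.Perm (Fin n)} (hσ₀ : σ ⟨i, Nat.lt_of_succ_lt hi⟩ = ⟨i, Nat.lt_of_succ_lt hi⟩)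
    (hσ₁ : σ ⟨i + 1, hi⟩ = ⟨i + 1, hi⟩) (ρ : Equiv.Perm (Fin n)) :
    koszulBase d i hi (σ * ρ) = koszulBase d i hi ρ := by
  have hσ₀' := Equiv.Perm.inv_eq_iff_eq.mpr hσ₀.symm
  have hσ₁' := Equiv.Perm.inv_eq_iff_eq.mpr hσ₁.symm
  simp only [koszulBase, mul_inv_rev, Equiv.Perm.mul_apply, hσ₀', hσ₁']

lemma swap_succ_apply_of_distant {n : ℕ} {i j : ℕ} (hi : i < n) (hj : j + 1 < n)
    (hij : i < j ∨ j + 1 < i) :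
    Equiv.swap (⟨j, Nat.lt_of_succ_lt hj⟩ : Fin n) ⟨j + 1, hj⟩ ⟨i, hi⟩ = ⟨i, hi⟩ :=
  Equiv.swap_apply_of_ne_of_ne (by simp only [ne_eq, Fin.mk.injEq]; omega)
    (by simp only [ne_eq, Fin.mk.injEq]; omega)

lemma koszulBase_mul_swap_of_distant {n : ℕ} (d : Fin n → ℤ) {i j : ℕ}
    (hi : i + 1 < n) (hj : j + 1 < n) (hij : i + 1 < j ∨ j + 1 < i)
    (ρ : Equiv.Perm (Fin n)) :
    koszulBase d i hi (Equiv.swap ⟨j, Nat.lt_of_succ_lt hj⟩ ⟨j + 1, hj⟩ * ρ) =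
      koszulBase d i hi ρ :=
  koszulBase_mul_of_apply_eq d i hi
    (swap_succ_apply_of_distant _ hj (by omega)) (swap_succ_apply_of_distant hi hj (by omega)) ρ

/-- Distant commutation relations are compatible with the word-evaluation κ₀. -/
theorem koszul_distant_comm (n : ℕ) (d : Fin n → ℤ) (i j : ℕ)
    (hi : i + 1 < n) (hj : j + 1 < n) (hij : i + 1 < j ∨ j + 1 < i)
    (ρ : Equiv.Perm (Fin n)) :
    (koszulBase d i hi (Equiv.swap ⟨j, Nat.lt_of_succ_lt hj⟩ ⟨j + 1, hj⟩ * ρ) *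
        koszulBase d j hj ρ =
      koszulBase d j hj (Equiv.swap ⟨i, Nat.lt_of_succ_lt hi⟩ ⟨i + 1, hi⟩ * ρ) *
        koszulBase d i hi ρ) ∧
    koszulBase d i hi (Equiv.swap ⟨j, Nat.lt_of_succ_lt hj⟩ ⟨j + 1, hj⟩ * ρ) *
        koszulBase d j hj ρ =
      (-1 : ℤˣ) ^ (d (ρ⁻¹ ⟨i, Nat.lt_of_succ_lt hi⟩) * d (ρ⁻¹ ⟨i + 1, hi⟩) +
        d (ρ⁻¹ ⟨j, Nat.lt_of_succ_lt hj⟩) * d (ρ⁻¹ ⟨j + 1, hj⟩)) := by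
  rw [koszulBase_mul_swap_of_distant d hi hj hij,
    koszulBase_mul_swap_of_distant d hj hi hij.symm]
  exact ⟨mul_comm _ _, (zpow_add _ _ _).symm⟩
end

section
/- Let κ be the Koszul sign map determined by a degree function d. The map κ(-, ρ) : S_n → {±1} is a group homomorphism for some ρ ∈ S_n if and only if κ(-, e) : S_n → {±1} is a group homomorphism (e the identity), and in that case all the maps κ(-, ρ), ρ ∈ S_n, coincide. -/
section Cocycle

variable {G M : Type*} [Group G] [Mul M] [IsRightCancelMul M] {κ : G → G → M}

theorem cocycle_apply_eq_of_map_mul (hκ : ∀ σ τ ρ, κ (σ * τ) ρ = κ σ (τ * ρ) * κ τ ρ) {ρ : G}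
    (hρ : ∀ σ τ, κ (σ * τ) ρ = κ σ ρ * κ τ ρ) (σ μ : G) : κ σ μ = κ σ ρ := by
  have h := hκ σ (μ * ρ⁻¹) ρ
  rw [hρ, inv_mul_cancel_right] at h
  exact (mul_right_cancel h).symm

theorem cocycle_map_mul_of_map_mul (hκ : ∀ σ τ ρ, κ (σ * τ) ρ = κ σ (τ * ρ) * κ τ ρ) {ρ : G}
    (hρ : ∀ σ τ, κ (σ * τ) ρ = κ σ ρ * κ τ ρ) (μ σ τ : G) :
    κ (σ * τ) μ = κ σ μ * κ τ μ := by
  simp only [cocycle_apply_eq_of_map_mul hκ hρ _ μ, hρ]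

end Cocycle

theorem koszul_hom_iff_hom_at_one_general (n : ℕ) (d : Fin n → ℤ)
    (κ : Equiv.Perm (Fin n) → Equiv.Perm (Fin n) → ℤˣ) (hκ : IsKoszul d κ) :
    ((∃ ρ : Equiv.Perm (Fin n), ∀ σ τ, κ (σ * τ) ρ = κ σ ρ * κ τ ρ) ↔
      (∀ σ τ : Equiv.Perm (Fin n), κ (σ * τ) 1 = κ σ 1 * κ τ 1)) ∧
    ((∀ σ τ : Equiv.Perm (Fin n), κ (σ * τ) 1 = κ σ 1 * κ τ 1) →
      ∀ (ρ σ : Equiv.Perm (Fin n)), κ σ ρ = κ σ 1) := by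
  obtain ⟨hcocycle, -⟩ := hκ
  refine ⟨⟨?_, fun h => ⟨1, h⟩⟩, ?_⟩
  · rintro ⟨ρ, hρ⟩
    exact cocycle_map_mul_of_map_mul hcocycle hρ 1
  · intro h ρ σ
    exact cocycle_apply_eq_of_map_mul hcocycle h σ ρ

theorem koszul_hom_iff_hom_at_one (n : ℕ) (hn : 2 ≤ n) (d : Fin n → ℤ)
    (κ : Equiv.Perm (Fin n) → Equiv.Perm (Fin n) → ℤˣ) (hκ : IsKoszul d κ) :
    ((∃ ρ : Equiv.Perm (Fin n), ∀ σ τ, κ (σ * τ) ρ = κ σ ρ * κ τ ρ) ↔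
      (∀ σ τ : Equiv.Perm (Fin n), κ (σ * τ) 1 = κ σ 1 * κ τ 1)) ∧
    ((∀ σ τ : Equiv.Perm (Fin n), κ (σ * τ) 1 = κ σ 1 * κ τ 1) →
      ∀ (ρ σ : Equiv.Perm (Fin n)), κ σ ρ = κ σ 1) :=
  koszul_hom_iff_hom_at_one_general n d κ hκ
end

section
/- Let n ≥ 3 and κ the Koszul sign map determined by a degree function d. The map κ(-, e) : S_n → {±1} is a group homomorphism if and only if either all the integers d(1),...,d(n) have the same parity, or exactly one of them is odd. -/
def ParityOfProductsConstant {α : Type*} (d : α → ℤ) : Prop :=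
  ∀ a b a' b', a ≠ b → a' ≠ b' → (Even (d a * d b) ↔ Even (d a' * d b'))

theorem parityOfProductsConstant_iff {α : Type*} (d : α → ℤ) :
    ParityOfProductsConstant d ↔ (∀ i j, d i % 2 = d j % 2) ∨ ∃! i, Odd (d i) := by
  constructor
  · intro h
    by_cases htwo : ∃ i j, i ≠ j ∧ Odd (d i) ∧ Odd (d j)
    · obtain ⟨i, j, hij, hi, hj⟩ := htwo
      have hodd : ∀ k, Odd (d k) := by
        intro k
        rcases eq_or_ne k i with rfl | hki
        · exact hi
        · by_contra hk
          rw [Int.not_odd_iff_even] at hk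
          exact Int.not_even_iff_odd.2 (hi.mul hj) ((h k i i j hki hij).1 (hk.mul_right _))
      left
      intro i j
      rw [Int.odd_iff.1 (hodd i), Int.odd_iff.1 (hodd j)]
    · push Not at htwo
      by_cases hone : ∃ i, Odd (d i)
      · obtain ⟨i, hi⟩ := hone
        exact Or.inr ⟨i, hi, fun j hj => by_contra fun hji => htwo j i hji hj hi⟩
      · push Not at hone
        left
        intro i j
        rw [Int.even_iff.1 (Int.not_odd_iff_even.1 (hone i)),
          Int.even_iff.1 (Int.not_odd_iff_even.1 (hone j))]
  · rintro (h | ⟨i, -, hi⟩) a b a' b' hab hab'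
    · have hpar : ∀ k, Even (d k) ↔ Even (d a) := fun k => by rw [Int.even_iff, Int.even_iff, h]
      simp only [Int.even_mul, hpar b, hpar a', hpar b', or_self]
    · have heven : ∀ x y, x ≠ y → Even (d x * d y) := fun x y hxy => by
        by_contra hxy'
        obtain ⟨hx, hy⟩ := Int.odd_mul.1 (Int.not_even_iff_odd.1 hxy')
        exact hxy ((hi x hx).trans (hi y hy).symm)
      exact iff_of_true (heven a b hab) (heven a' b' hab')

theorem Equiv.Perm.exists_apply_eq_and_apply_eq {α : Type*} {a b x y : α} (hab : a ≠ b)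
    (hxy : x ≠ y) : ∃ σ : Equiv.Perm α, σ a = x ∧ σ b = y := by
  classical
  have hb : Equiv.swap a x b ≠ x := fun h =>
    hab.symm ((Equiv.swap a x).injective (h.trans (Equiv.swap_apply_left a x).symm))
  refine ⟨Equiv.swap (Equiv.swap a x b) y * Equiv.swap a x, ?_, ?_⟩
  · simp only [Equiv.Perm.mul_apply, Equiv.swap_apply_left]
    exact Equiv.swap_apply_of_ne_of_ne hb.symm hxy
  · simp only [Equiv.Perm.mul_apply, Equiv.swap_apply_left]

theorem Equiv.Perm.mclosure_swap_adjacent (n : ℕ) :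
    Submonoid.closure {σ : Equiv.Perm (Fin n) |
      ∃ (i : ℕ) (h : i + 1 < n), σ = Equiv.swap ⟨i, Nat.lt_of_succ_lt h⟩ ⟨i + 1, h⟩} = ⊤ := by
  cases n with
  | zero => exact eq_top_iff.2 fun σ _ => Subsingleton.elim σ 1 ▸ one_mem _
  | succ m =>
    rw [eq_top_iff, ← Equiv.Perm.mclosure_swap_castSucc_succ]
    refine Submonoid.closure_mono ?_
    rintro _ ⟨i, rfl⟩
    exact ⟨i, by omega, rfl⟩

theorem Int.units_neg_one_zpow_eq_iff (m k : ℤ) :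
    (-1 : ℤˣ) ^ m = (-1) ^ k ↔ (Even m ↔ Even k) := by
  rw [← Int.negOnePow_def, ← Int.negOnePow_def, Int.negOnePow_eq_iff, Int.even_sub]

section Cocycle

variable {G M : Type*} [Monoid G] [CancelMonoid M] {κ : G → G → M}

theorem cocycle_one_left (hκ : ∀ σ τ ρ, κ (σ * τ) ρ = κ σ (τ * ρ) * κ τ ρ) (ρ : G) :
    κ 1 ρ = 1 := by
  have h := hκ 1 1 ρ
  rw [one_mul, one_mul] at h
  exact mul_eq_left.1 h.symm

theorem cocycle_map_mul_one_iff (hκ : ∀ σ τ ρ, κ (σ * τ) ρ = κ σ (τ * ρ) * κ τ ρ) :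
    (∀ σ τ, κ (σ * τ) 1 = κ σ 1 * κ τ 1) ↔ ∀ σ ρ, κ σ ρ = κ σ 1 := by
  refine forall_congr' fun σ => forall_congr' fun τ => ?_
  rw [hκ σ τ 1, mul_one, mul_left_inj]

theorem cocycle_eq_of_mclosure_eq_top (hκ : ∀ σ τ ρ, κ (σ * τ) ρ = κ σ (τ * ρ) * κ τ ρ)
    {S : Set G} (hS : Submonoid.closure S = ⊤) (h : ∀ s ∈ S, ∀ ρ, κ s ρ = κ s 1) (σ ρ : G) :
    κ σ ρ = κ σ 1 := by
  induction (hS ▸ Submonoid.mem_top σ : σ ∈ Submonoid.closure S) using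
    Submonoid.closure_induction generalizing ρ with
  | mem s hs => exact h s hs ρ
  | one => rw [cocycle_one_left hκ, cocycle_one_left hκ]
  | mul σ τ _ _ ihσ ihτ => rw [hκ, hκ, ihσ, ihσ (τ * 1), ihτ]

end Cocycle

namespace IsKoszul

variable {n : ℕ} {d : Fin n → ℤ} {κ : Equiv.Perm (Fin n) → Equiv.Perm (Fin n) → ℤˣ}

theorem parityOfProductsConstant (hκ : IsKoszul d κ) (h : ∀ σ ρ, κ σ ρ = κ σ 1) :
    ParityOfProductsConstant d := by
  intro a b a' b' hab hab'
  have h01 : 0 + 1 < n := by have := Fin.val_ne_of_ne hab; omega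
  have hpair : ∀ x y, x ≠ y → (Even (d x * d y) ↔ Even (d ⟨0, by omega⟩ * d ⟨1, h01⟩)) := by
    intro x y hxy
    obtain ⟨σ, hσx, hσy⟩ :=
      Equiv.Perm.exists_apply_eq_and_apply_eq (a := (⟨0, by omega⟩ : Fin n)) (b := ⟨1, h01⟩)
        (by simp [Fin.ext_iff]) hxy
    have hswap := h (Equiv.swap ⟨0, by omega⟩ ⟨0 + 1, h01⟩) σ⁻¹
    rw [hκ.2 0 h01, hκ.2 0 h01, inv_inv, inv_one, Int.units_neg_one_zpow_eq_iff] at hswap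
    simpa [hσx, hσy] using hswap
  exact (hpair a b hab).trans (hpair a' b' hab').symm

theorem eq_of_parityOfProductsConstant (hκ : IsKoszul d κ) (h : ParityOfProductsConstant d)
    (σ ρ : Equiv.Perm (Fin n)) : κ σ ρ = κ σ 1 := by
  refine cocycle_eq_of_mclosure_eq_top hκ.1 (Equiv.Perm.mclosure_swap_adjacent n) ?_ σ ρ
  rintro _ ⟨i, hi, rfl⟩ ρ
  rw [hκ.2 i hi ρ, hκ.2 i hi 1, Int.units_neg_one_zpow_eq_iff]
  exact h _ _ _ _ (ρ⁻¹.injective.ne (by simp [Fin.ext_iff])) (by simp [Fin.ext_iff])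

theorem eq_iff_parityOfProductsConstant (hκ : IsKoszul d κ) :
    (∀ σ ρ, κ σ ρ = κ σ 1) ↔ ParityOfProductsConstant d :=
  ⟨hκ.parityOfProductsConstant, hκ.eq_of_parityOfProductsConstant⟩

end IsKoszul

theorem koszul_hom_iff_parity_general (n : ℕ) (d : Fin n → ℤ)
    (κ : Equiv.Perm (Fin n) → Equiv.Perm (Fin n) → ℤˣ) (hκ : IsKoszul d κ) :
    (∀ σ τ : Equiv.Perm (Fin n), κ (σ * τ) 1 = κ σ 1 * κ τ 1) ↔
      ((∀ i j : Fin n, d i % 2 = d j % 2) ∨ (∃! i : Fin n, Odd (d i))) := by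
  rw [cocycle_map_mul_one_iff hκ.1, hκ.eq_iff_parityOfProductsConstant,
    parityOfProductsConstant_iff]

theorem koszul_hom_iff_parity (n : ℕ) (hn : 3 ≤ n) (d : Fin n → ℤ)
    (κ : Equiv.Perm (Fin n) → Equiv.Perm (Fin n) → ℤˣ) (hκ : IsKoszul d κ) :
    (∀ σ τ : Equiv.Perm (Fin n), κ (σ * τ) 1 = κ σ 1 * κ τ 1) ↔
      ((∀ i j : Fin n, d i % 2 = d j % 2) ∨ (∃! i : Fin n, Odd (d i))) :=
  koszul_hom_iff_parity_general n d κ hκ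
end

section
/- Let n ≥ 3 and κ the Koszul sign map determined by a degree function d. The map κ(-, e) is constant equal to 1 if and only if all the integers d(1),...,d(n) are even with possibly one exception. -/
open Equiv

section Cocycle

variable {G M : Type*} [Monoid G] {κ : G → G → M}

theorem forall_apply_one_eq_one_iff [Monoid M]
    (hmul : ∀ σ τ ρ, κ (σ * τ) ρ = κ σ (τ * ρ) * κ τ ρ) :
    (∀ σ, κ σ 1 = 1) ↔ ∀ σ ρ, κ σ ρ = 1 :=
  ⟨fun h σ ρ => by simpa [h] using (hmul σ ρ 1).symm, fun h σ => h σ 1⟩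

theorem forall_eq_one_iff_of_closure_eq_top [LeftCancelMonoid M]
    (hmul : ∀ σ τ ρ, κ (σ * τ) ρ = κ σ (τ * ρ) * κ τ ρ)
    {S : Set G} (hS : Submonoid.closure S = ⊤) :
    (∀ σ ρ, κ σ ρ = 1) ↔ ∀ s ∈ S, ∀ ρ, κ s ρ = 1 := by
  refine ⟨fun h s _ ρ => h s ρ, fun h σ => ?_⟩
  have hσ : σ ∈ Submonoid.closure S := hS ▸ Submonoid.mem_top σ
  induction hσ using Submonoid.closure_induction with
  | mem s hs => exact h s hs
  | one => exact fun ρ => by simpa using (hmul 1 1 ρ).symm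
  | mul σ τ _ _ hσ hτ => exact fun ρ => by rw [hmul, hσ, hτ, one_mul]

end Cocycle

namespace Equiv.Perm

def adjacentSwaps (n : ℕ) : Set (Perm (Fin n)) :=
  {τ | ∃ (i : ℕ) (h : i + 1 < n), swap ⟨i, Nat.lt_of_succ_lt h⟩ ⟨i + 1, h⟩ = τ}

theorem closure_adjacentSwaps (n : ℕ) : Submonoid.closure (adjacentSwaps n) = ⊤ := by
  cases n with
  | zero => exact Subsingleton.elim _ _
  | succ m =>
    refine eq_top_mono (Submonoid.closure_mono ?_) (mclosure_swap_castSucc_succ m)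
    rintro _ ⟨i, rfl⟩
    exact ⟨i, by omega, rfl⟩

end Equiv.Perm

theorem forall_ne_even_mul_iff {ι : Type*} (d : ι → ℤ) :
    (∀ a b, a ≠ b → Even (d a * d b)) ↔ ∀ a b, Odd (d a) → Odd (d b) → a = b := by
  simp only [Int.even_mul, ← Int.not_even_iff_odd]
  exact forall₂_congr fun a b => by tauto

namespace IsKoszul

variable {n : ℕ} {d : Fin n → ℤ} {κ : Perm (Fin n) → Perm (Fin n) → ℤˣ}

theorem apply_swap_eq_one_iff (hκ : IsKoszul d κ) (i : ℕ) (h : i + 1 < n) (ρ : Perm (Fin n)) :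
    κ (swap ⟨i, Nat.lt_of_succ_lt h⟩ ⟨i + 1, h⟩) ρ = 1 ↔
      Even (d (ρ⁻¹ ⟨i, Nat.lt_of_succ_lt h⟩) * d (ρ⁻¹ ⟨i + 1, h⟩)) := by
  rw [hκ.2, neg_one_zpow_eq_ite]
  split_ifs with heven
  · simp only [heven]
  · simp only [heven, iff_false]
    decide

theorem forall_adjacentSwaps_eq_one_iff (hκ : IsKoszul d κ) :
    (∀ s ∈ Perm.adjacentSwaps n, ∀ ρ, κ s ρ = 1) ↔ ∀ a b, a ≠ b → Even (d a * d b) := by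
  constructor
  · intro H a b hab
    have h : 0 + 1 < n := by have := Fin.val_ne_of_ne hab; omega
    obtain ⟨π, hπa, hπb⟩ := MulAction.is_two_pretransitive_iff.mp
      (Perm.isMultiplyPretransitive (Fin n) 2)
      (show (⟨0, Nat.lt_of_succ_lt h⟩ : Fin n) ≠ ⟨1, h⟩ by simp [Fin.ext_iff]) hab
    have heven := (hκ.apply_swap_eq_one_iff 0 h π⁻¹).mp (H _ ⟨0, h, rfl⟩ _)
    rwa [inv_inv, ← Perm.smul_def, ← Perm.smul_def, hπa, hπb] at heven
  · rintro H _ ⟨i, h, rfl⟩ ρ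
    exact (hκ.apply_swap_eq_one_iff i h ρ).mpr (H _ _ (ρ⁻¹.injective.ne (by simp [Fin.ext_iff])))

end IsKoszul

theorem koszul_trivial_iff_almost_even_general (n : ℕ) (d : Fin n → ℤ)
    (κ : Equiv.Perm (Fin n) → Equiv.Perm (Fin n) → ℤˣ) (hκ : IsKoszul d κ) :
    (∀ σ : Equiv.Perm (Fin n), κ σ 1 = 1) ↔
      (∀ i j : Fin n, Odd (d i) → Odd (d j) → i = j) := by
  rw [forall_apply_one_eq_one_iff hκ.1,
    forall_eq_one_iff_of_closure_eq_top hκ.1 (Perm.closure_adjacentSwaps n),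
    hκ.forall_adjacentSwaps_eq_one_iff, forall_ne_even_mul_iff]

theorem koszul_trivial_iff_almost_even (n : ℕ) (hn : 3 ≤ n) (d : Fin n → ℤ)
    (κ : Equiv.Perm (Fin n) → Equiv.Perm (Fin n) → ℤˣ) (hκ : IsKoszul d κ) :
    (∀ σ : Equiv.Perm (Fin n), κ σ 1 = 1) ↔
      (∀ i j : Fin n, Odd (d i) → Odd (d j) → i = j) :=
  koszul_trivial_iff_almost_even_general n d κ hκ
end
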